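/- For every IMAB instance I = (f_1, …, f_k) and all N, T ∈ ℕ with T ≥ 4 and T/2 ≤ N ≤ T, the offline optima satisfy 5·OPT(I,N) ≥ OPT(I,T). -/

import Mathlib

/-!
Since each `f i` is nondecreasing, the average reward `Rew f m / m` is nondecreasing in `m`, so
splitting `T` pulls among the arms earns at most what the best single arm earns with all `T`
pulls: `OPT f T ≤ maxᵢ Rew (f i) T`. For one arm, decreasing marginal returns make `f`
subadditive, so `f (2N) ≤ 2 f N` and, pairing `f j + f (N - j) ≥ f N`, also `N f N ≤ 2 Rew f N`.
Hence `Rew f (2N) ≤ Rew f N + N f (2N) ≤ 5 Rew f N ≤ 5 OPT f N`, and `T ≤ 2N` finishes.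
-/

open scoped Classical

/-- A reward function: bounded in [0,1], nondecreasing, with decreasing marginal returns. -/
def IsRewardFn (f : ℕ → ℝ) : Prop :=
  (∀ n, 0 ≤ f n) ∧ (∀ n, f n ≤ 1) ∧ Monotone f ∧
    ∀ n, 1 ≤ n → f (n + 1) - f n ≤ f n - f (n - 1)

/-- Cumulative reward from pulling an arm with reward function `f` for `N` pulls. -/
noncomputable def Rew (f : ℕ → ℝ) (N : ℕ) : ℝ := ∑ n ∈ Finset.Icc 1 N, f n

/-- Offline optimum: the best total reward over all allocations of `T` pulls to the `k` arms. -/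
noncomputable def OPT {k : ℕ} (f : Fin k → ℕ → ℝ) (T : ℕ) : ℝ :=
  sSup {x : ℝ | ∃ M : Fin k → ℕ, (∑ i, M i) = T ∧ x = ∑ i, Rew (f i) (M i)}

open Finset

section Rew

variable {f : ℕ → ℝ}

@[simp]
lemma rew_zero (f : ℕ → ℝ) : Rew f 0 = 0 := by
  simp [Rew]

lemma rew_eq_sum_range (f : ℕ → ℝ) (n : ℕ) : Rew f n = ∑ i ∈ range n, f (i + 1) := by
  rw [Rew, ← Ico_add_one_right_eq_Icc, sum_Ico_eq_sum_range]
  simp [Nat.add_comm]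

lemma rew_add (f : ℕ → ℝ) (m n : ℕ) :
    Rew f (m + n) = Rew f m + ∑ i ∈ range n, f (m + i + 1) := by
  simp only [rew_eq_sum_range, sum_range_add, add_assoc]

lemma rew_nonneg (hf : ∀ n, 0 ≤ f n) (n : ℕ) : 0 ≤ Rew f n :=
  sum_nonneg fun i _ => hf i

lemma rew_mono (hf : ∀ n, 0 ≤ f n) : Monotone (Rew f) := fun _ _ h =>
  sum_le_sum_of_subset_of_nonneg (Icc_subset_Icc_right h) fun i _ _ => hf i

lemma rew_le_of_le_one (hf : ∀ n, f n ≤ 1) (n : ℕ) : Rew f n ≤ n := by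
  simpa [Rew] using sum_le_card_nsmul (Icc 1 n) f 1 fun i _ => hf i

lemma Monotone.mul_rew_le (hf : Monotone f) {m M : ℕ} (h : m ≤ M) :
    (M : ℝ) * Rew f m ≤ m * Rew f M := by
  obtain ⟨d, rfl⟩ := Nat.exists_eq_add_of_le h
  have head : Rew f m ≤ m * f m := by
    rw [rew_eq_sum_range]
    simpa using sum_le_card_nsmul (range m) _ (f m) fun i hi =>
      hf (Nat.succ_le_of_lt (mem_range.mp hi))
  have tail : d * f m ≤ ∑ i ∈ range d, f (m + i + 1) := by
    simpa using card_nsmul_le_sum (range d) _ (f m) fun i _ => hf (by omega)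
  rw [rew_add]
  push_cast
  linarith [mul_le_mul_of_nonneg_left head d.cast_nonneg,
    mul_le_mul_of_nonneg_left tail m.cast_nonneg]

lemma Monotone.rew_le_div_mul (hf : Monotone f) {m M : ℕ} (h : m ≤ M) :
    Rew f m ≤ m / M * Rew f M := by
  rcases M.eq_zero_or_pos with rfl | hM
  · obtain rfl : m = 0 := by omega
    simp
  · rw [div_mul_eq_mul_div, le_div_iff₀ (by positivity)]
    linarith [hf.mul_rew_le h]

end Rew

namespace IsRewardFn

variable {f : ℕ → ℝ}

lemma nonneg (hf : IsRewardFn f) (n : ℕ) : 0 ≤ f n := hf.1 n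

lemma le_one (hf : IsRewardFn f) (n : ℕ) : f n ≤ 1 := hf.2.1 n

protected lemma monotone (hf : IsRewardFn f) : Monotone f := hf.2.2.1

lemma antitone_increment (hf : IsRewardFn f) : Antitone fun n => f (n + 1) - f n :=
  antitone_nat_of_succ_le fun n => by simpa using hf.2.2.2 (n + 1) (by omega)

lemma sub_le_sub (hf : IsRewardFn f) (a b : ℕ) : f (a + b) - f a ≤ f b - f 0 :=
  calc f (a + b) - f a = ∑ i ∈ range b, (f (a + i + 1) - f (a + i)) := by
        simpa [add_assoc] using (sum_range_sub (fun i => f (a + i)) b).symm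
    _ ≤ ∑ i ∈ range b, (f (i + 1) - f i) :=
        sum_le_sum fun i _ => hf.antitone_increment (Nat.le_add_left i a)
    _ = f b - f 0 := sum_range_sub f b

lemma le_add (hf : IsRewardFn f) (a b : ℕ) : f (a + b) ≤ f a + f b := by
  linarith [hf.sub_le_sub a b, hf.nonneg 0]

lemma mul_le_two_mul_rew (hf : IsRewardFn f) (n : ℕ) : n * f n ≤ 2 * Rew f n :=
  calc (n : ℝ) * f n = ∑ _i ∈ range n, f n := by simp
    _ ≤ ∑ i ∈ range n, (f (i + 1) + f (n - 1 - i)) := sum_le_sum fun i hi => by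
        have hin := mem_range.mp hi
        simpa [show i + 1 + (n - 1 - i) = n by omega] using hf.le_add (i + 1) (n - 1 - i)
    _ = Rew f n + ∑ i ∈ range n, f i := by
        rw [sum_add_distrib, sum_range_reflect f n, rew_eq_sum_range]
    _ ≤ 2 * Rew f n := by
        have := sum_le_sum fun i (_ : i ∈ range n) => hf.monotone i.le_succ
        rw [rew_eq_sum_range]
        linarith

lemma rew_two_mul_le (hf : IsRewardFn f) (n : ℕ) : Rew f (2 * n) ≤ 5 * Rew f n := by
  have tail : ∑ i ∈ range n, f (n + i + 1) ≤ n * f (2 * n) := by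
    simpa using sum_le_card_nsmul (range n) _ (f (2 * n)) fun i hi =>
      hf.monotone (by have := mem_range.mp hi; omega)
  have double : f (2 * n) ≤ 2 * f n := by
    linarith [two_mul n ▸ hf.le_add n n]
  calc Rew f (2 * n) = Rew f n + ∑ i ∈ range n, f (n + i + 1) := by rw [two_mul, rew_add]
    _ ≤ Rew f n + n * (2 * f n) := by
        gcongr
        exact tail.trans (mul_le_mul_of_nonneg_left double n.cast_nonneg)
    _ ≤ 5 * Rew f n := by linarith [hf.mul_le_two_mul_rew n]

end IsRewardFn

section OPT

variable {k : ℕ} {f : Fin k → ℕ → ℝ}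

lemma sum_rew_le_opt (hf : ∀ i, IsRewardFn (f i)) {M : Fin k → ℕ} {T : ℕ}
    (hM : ∑ i, M i = T) : ∑ i, Rew (f i) (M i) ≤ OPT f T := by
  refine le_csSup ⟨T, ?_⟩ ⟨M, hM, rfl⟩
  rintro _ ⟨M', hM', rfl⟩
  calc ∑ i, Rew (f i) (M' i) ≤ ∑ i, (M' i : ℝ) :=
        sum_le_sum fun i _ => rew_le_of_le_one (hf i).le_one (M' i)
    _ = T := by rw [← hM']; push_cast; rfl

lemma rew_le_opt (hf : ∀ i, IsRewardFn (f i)) (i : Fin k) (T : ℕ) :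
    Rew (f i) T ≤ OPT f T := by
  have := sum_rew_le_opt hf (M := Pi.single i T) (T := T) (by simp)
  rwa [sum_eq_single_of_mem i (mem_univ i) fun j _ hj => by simp [hj], Pi.single_eq_same]
    at this

lemma opt_nonneg (hf : ∀ i n, 0 ≤ f i n) (T : ℕ) : 0 ≤ OPT f T := by
  refine Real.sSup_nonneg ?_
  rintro _ ⟨M, -, rfl⟩
  exact sum_nonneg fun i _ => rew_nonneg (hf i) (M i)

lemma opt_le_of_forall_rew_le (hf : ∀ i, Monotone (f i)) {T : ℕ} {c : ℝ} (hc : 0 ≤ c)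
    (h : ∀ i, Rew (f i) T ≤ c) : OPT f T ≤ c := by
  refine Real.sSup_le ?_ hc
  rintro _ ⟨M, hM, rfl⟩
  have hMT : ∀ i, M i ≤ T := fun i =>
    hM ▸ single_le_sum (fun j _ => Nat.zero_le (M j)) (mem_univ i)
  calc ∑ i, Rew (f i) (M i) ≤ ∑ i, (M i : ℝ) / T * c :=
        sum_le_sum fun i _ => ((hf i).rew_le_div_mul (hMT i)).trans
          (mul_le_mul_of_nonneg_left (h i) (by positivity))
    _ = (T : ℝ) / T * c := by rw [← sum_mul, ← sum_div, ← hM]; push_cast; rfl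
    _ ≤ c := mul_le_of_le_one_left hc (div_self_le_one _)

end OPT

theorem opt_ratio_half_general (k : ℕ) (f : Fin k → ℕ → ℝ)
    (hf : ∀ i, IsRewardFn (f i)) (N T : ℕ)
    (hNlow : T ≤ 2 * N) :
    OPT f T ≤ 5 * OPT f N := by
  have hOPT : 0 ≤ OPT f N := opt_nonneg (fun i => (hf i).nonneg) N
  refine opt_le_of_forall_rew_le (fun i => (hf i).monotone) (by positivity) fun i => ?_
  calc Rew (f i) T ≤ Rew (f i) (2 * N) := rew_mono (hf i).nonneg hNlow
    _ ≤ 5 * Rew (f i) N := (hf i).rew_two_mul_le N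
    _ ≤ 5 * OPT f N := by gcongr; exact rew_le_opt hf i N

/-- For `T ≥ 4` and `T/2 ≤ N ≤ T`, the offline optima satisfy `5 · OPT(I,N) ≥ OPT(I,T)`. -/
theorem opt_ratio_half (k : ℕ) (hk : 0 < k) (f : Fin k → ℕ → ℝ)
    (hf : ∀ i, IsRewardFn (f i)) (N T : ℕ)
    (hT : 4 ≤ T) (hNlow : T ≤ 2 * N) (hNhigh : N ≤ T) :
    OPT f T ≤ 5 * OPT f N :=
  opt_ratio_half_general k f hf N T hNlow
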